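/- No tournament on 4 vertices is a τ-retentive tournament; i.e., no tournament T has a minimal τ-retentive set R with |R| = 4. -/

import Mathlib

variable {V : Type}

/-- Inneighbors of `v` inside the subtournament on `s` (excluding `v` itself). -/
def inn [DecidableEq V] (r : V → V → Prop) [DecidableRel r] (s : Finset V) (v : V) :
    Finset V :=
  (s.filter fun u => r u v).erase v

lemma inn_card_lt [DecidableEq V] (r : V → V → Prop) [DecidableRel r]
    (s : Finset V) (v : V) (hv : v ∈ s) : (inn r s v).card < s.card := by
  have h1 : inn r s v ⊆ s.erase v := by
    intro x hx
    rcases Finset.mem_erase.mp hx with ⟨hxv, hx2⟩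
    exact Finset.mem_erase.mpr ⟨hxv, (Finset.mem_filter.mp hx2).1⟩
  calc (inn r s v).card ≤ (s.erase v).card := Finset.card_le_card h1
    _ < s.card := Finset.card_erase_lt_of_mem hv

/-- The tournament equilibrium set of the subtournament of `r` on `s`:
the union of all minimal τ-retentive sets. -/
def tau [DecidableEq V] (r : V → V → Prop) [DecidableRel r] (s : Finset V) : Set V :=
  {x | ∃ A : Finset V, x ∈ A ∧ A ⊆ s ∧ A.Nonempty ∧
    (∀ v, v ∈ s → v ∈ A → ((inn r s v).Nonempty → tau r (inn r s v) ⊆ ↑A)) ∧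
    ∀ B : Finset V, B ⊆ s → B ⊂ A →
      ¬ (B.Nonempty ∧
        ∀ v, v ∈ s → v ∈ B → ((inn r s v).Nonempty → tau r (inn r s v) ⊆ ↑B))}
termination_by s.card
decreasing_by
  all_goals exact inn_card_lt r s v (by assumption)

/-- `A` is a τ-retentive set of the tournament on `s`. -/
def Retentive [DecidableEq V] (r : V → V → Prop) [DecidableRel r] (s A : Finset V) : Prop :=
  A ⊆ s ∧ A.Nonempty ∧ ∀ v ∈ A, (inn r s v).Nonempty → tau r (inn r s v) ⊆ ↑A

/-- `A` is a minimal τ-retentive set of the tournament on `s`. -/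
def MinRetentive [DecidableEq V] (r : V → V → Prop) [DecidableRel r] (s A : Finset V) : Prop :=
  Retentive r s A ∧ ∀ B, Retentive r s B → B ⊆ A → B = A

/-- `r` is a tournament on the vertex set `s`. -/
def IsTournament (r : V → V → Prop) (s : Finset V) : Prop :=
  (∀ v ∈ s, ¬ r v v) ∧ ∀ u ∈ s, ∀ v ∈ s, u ≠ v → (r u v ↔ ¬ r v u)

/-- `u` is the captain of `v` in the subtournament on `s`:
`u` dominates `v` and all other inneighbors of `v`. -/
def IsCaptain (r : V → V → Prop) (s : Finset V) (u v : V) : Prop :=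
  u ∈ s ∧ v ∈ s ∧ r u v ∧ ∀ w ∈ s, w ≠ u → r w v → r u w

/-- The (undirected) domination graph of the subtournament on `s`. -/
def domGraph (r : V → V → Prop) (s : Finset V) : SimpleGraph V where
  Adj u v := (IsCaptain r s u v ∨ IsCaptain r s v u) ∧ u ≠ v
  symm := by
    constructor
    intro u v h
    exact ⟨h.1.symm, h.2.symm⟩
  loopless := by
    constructor
    intro u h
    exact h.2 rfl

/-!
Let `R` be a minimal τ-retentive set with four elements. By minimality every `v ∈ R` beats some
other member of `R`, so at most two members of `R` beat `v`; hence `τ(N⁻(v))` lies in a set of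
size two. In a tournament no minimal τ-retentive set has two elements, so `τ(N⁻(v)) = {c(v)}`
where `c(v)` is the Condorcet winner of `N⁻(v)`, i.e. the captain of `v`. Every nonempty
`c`-closed subset of `R` is τ-retentive, so `c` permutes `R` as a single `4`-cycle. But the captain
of the captain of `v` is beaten by `v` whenever it differs from `v`, so `v → c²(v) → c⁴(v) = v`,
contradicting asymmetry.
-/

section Tournament

variable {r : V → V → Prop} {s t : Finset V} {u v : V}

lemma IsTournament.asymm (hT : IsTournament r s) (hu : u ∈ s) (hv : v ∈ s) (h : r u v) :
    ¬ r v u := by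
  by_cases huv : u = v
  · subst huv
    exact hT.1 u hu
  · exact (hT.2 u hu v hv huv).mp h

lemma IsTournament.rel_of_not_rel (hT : IsTournament r s) (hu : u ∈ s) (hv : v ∈ s)
    (huv : u ≠ v) (h : ¬ r u v) : r v u := by
  by_contra h'
  exact h ((hT.2 u hu v hv huv).mpr h')

lemma IsTournament.mono (hT : IsTournament r s) (hts : t ⊆ s) : IsTournament r t :=
  ⟨fun v hv => hT.1 v (hts hv), fun u hu v hv huv => hT.2 u (hts hu) v (hts hv) huv⟩

lemma IsCaptain.rel_of_isCaptain {c d : V} (hd : IsCaptain r s d v) (hc : IsCaptain r s c d)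
    (hT : IsTournament r s) (hcv : c ≠ v) : r v c := by
  obtain ⟨hds, hvs, -, hdom⟩ := hd
  obtain ⟨hcs, -, hcd, -⟩ := hc
  by_contra hvc
  have hcd_ne : c ≠ d := by
    rintro rfl
    exact hT.1 c hcs hcd
  exact hT.asymm hcs hds hcd (hdom c hcs hcd_ne (hT.rel_of_not_rel hvs hcs hcv.symm hvc))

end Tournament

section Retentive

variable [DecidableEq V] (r : V → V → Prop) [DecidableRel r] {s A M : Finset V} {u v z : V}

lemma mem_inn : u ∈ inn r s v ↔ u ≠ v ∧ u ∈ s ∧ r u v := by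
  simp [inn]

lemma inn_subset (s : Finset V) (v : V) : inn r s v ⊆ s :=
  fun _ hu => ((mem_inn r).mp hu).2.1

lemma mem_tau_iff : u ∈ tau r s ↔ ∃ M, u ∈ M ∧ MinRetentive r s M := by
  rw [tau]
  constructor
  · rintro ⟨M, hu, hMs, hMne, hret, hmin⟩
    refine ⟨M, hu, ⟨hMs, hMne, fun v hv => hret v (hMs hv) hv⟩, fun B hB hBM => ?_⟩
    by_contra hne
    exact hmin B hB.1 (lt_of_le_of_ne hBM hne) ⟨hB.2.1, fun v _ hv => hB.2.2 v hv⟩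
  · rintro ⟨M, hu, ⟨hMs, hMne, hret⟩, hmin⟩
    refine ⟨M, hu, hMs, hMne, fun v _ hv => hret v hv, ?_⟩
    rintro B hBs hBM ⟨hBne, hBret⟩
    exact hBM.ne (hmin B ⟨hBs, hBne, fun v hv => hBret v (hBs hv) hv⟩ hBM.subset)

lemma tau_subset (s : Finset V) : tau r s ⊆ ↑s := by
  intro u hu
  obtain ⟨M, huM, hM⟩ := (mem_tau_iff r).mp hu
  exact hM.1.1 huM

variable {r}

lemma MinRetentive.coe_subset_tau (hM : MinRetentive r s M) : ↑M ⊆ tau r s :=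
  fun _ hu => (mem_tau_iff r).mpr ⟨M, hu, hM⟩

lemma retentive_self (hs : s.Nonempty) : Retentive r s s :=
  ⟨subset_rfl, hs, fun v _ _ =>
    (tau_subset r _).trans (Finset.coe_subset.mpr (inn_subset r s v))⟩

lemma Retentive.exists_minRetentive (hA : Retentive r s A) :
    ∃ M ⊆ A, MinRetentive r s M := by
  obtain ⟨M, hMA, hM⟩ := exists_minimal_le_of_wellFoundedLT (Retentive r s) A hA
  exact ⟨M, hMA, hM.1, fun B hB hBM => le_antisymm hBM (hM.2 hB hBM)⟩

variable (r) in
lemma tau_nonempty (hs : s.Nonempty) : (tau r s).Nonempty := by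
  obtain ⟨M, -, hM⟩ := (retentive_self (r := r) hs).exists_minRetentive
  obtain ⟨u, hu⟩ := hM.1.2.1
  exact ⟨u, hM.coe_subset_tau hu⟩

lemma Retentive.tau_inn_subset (hA : Retentive r s A) (hv : v ∈ A)
    (hinn : (inn r s v).Nonempty) : tau r (inn r s v) ⊆ ↑(A ∩ inn r s v) := by
  rw [Finset.coe_inter]
  exact Set.subset_inter (hA.2.2 v hv hinn) (tau_subset r _)

lemma retentive_singleton_iff : Retentive r s {z} ↔ z ∈ s ∧ inn r s z = ∅ := by
  constructor
  · intro hz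
    refine ⟨Finset.singleton_subset_iff.mp hz.1, ?_⟩
    by_contra hinn
    rw [← ne_eq, ← Finset.nonempty_iff_ne_empty] at hinn
    obtain ⟨u, hu⟩ := tau_nonempty r hinn
    have hu' := hz.tau_inn_subset (Finset.mem_singleton_self z) hinn hu
    simp only [Finset.coe_inter, Finset.coe_singleton, Set.mem_inter_iff, Set.mem_singleton_iff,
      Finset.mem_coe, mem_inn] at hu'
    exact hu'.2.1 hu'.1
  · rintro ⟨hzs, hinn⟩
    refine ⟨Finset.singleton_subset_iff.mpr hzs, Finset.singleton_nonempty z, ?_⟩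
    intro v hv hne
    rw [Finset.mem_singleton.mp hv, hinn] at hne
    exact absurd hne Finset.not_nonempty_empty

lemma MinRetentive.eq_singleton_of_mem (hM : MinRetentive r s M) (hz : z ∈ M)
    (hinn : inn r s z = ∅) : M = {z} :=
  (hM.2 {z} (retentive_singleton_iff.mpr ⟨hM.1.1 hz, hinn⟩)
    (Finset.singleton_subset_iff.mpr hz)).symm

lemma MinRetentive.inn_nonempty (hM : MinRetentive r s M) (hcard : 1 < M.card) (hv : v ∈ M) :
    (inn r s v).Nonempty := by
  rw [Finset.nonempty_iff_ne_empty]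
  intro hinn
  rw [hM.eq_singleton_of_mem hv hinn, Finset.card_singleton] at hcard
  exact hcard.false

lemma MinRetentive.exists_mem_inn (hM : MinRetentive r s M) (hcard : 1 < M.card) (hv : v ∈ M) :
    ∃ u ∈ M, u ∈ inn r s v := by
  have hinn := hM.inn_nonempty hcard hv
  obtain ⟨u, hu⟩ := tau_nonempty r hinn
  obtain ⟨huM, huinn⟩ := Finset.mem_inter.mp (hM.1.tau_inn_subset hv hinn hu)
  exact ⟨u, huM, huinn⟩

/-- Removing a vertex that beats no other member would leave a smaller τ-retentive set, since
members of `τ(N⁻(u))` beat `u`. -/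
lemma MinRetentive.exists_mem_erase_rel (hM : MinRetentive r s M) (hcard : 1 < M.card)
    (hv : v ∈ M) : ∃ u ∈ M.erase v, r v u := by
  by_contra! hbeat
  have hret : Retentive r s (M.erase v) := by
    refine ⟨(M.erase_subset v).trans hM.1.1, Finset.card_pos.mp ?_, ?_⟩
    · rw [Finset.card_erase_of_mem hv]
      omega
    intro u hu hinn w hw
    have hwM := hM.1.2.2 u (Finset.mem_of_mem_erase hu) hinn hw
    have hwu := (mem_inn r).mp (tau_subset r _ hw)
    have hwv : w ≠ v := by
      rintro rfl
      exact hbeat u hu hwu.2.2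
    exact Finset.mem_erase.mpr ⟨hwv, hwM⟩
  have heq := hM.2 _ hret (M.erase_subset v)
  exact Finset.notMem_erase v M (by rw [heq]; exact hv)

lemma MinRetentive.card_ne_two (hT : IsTournament r s) (hM : MinRetentive r s M) :
    M.card ≠ 2 := by
  intro hcard
  obtain ⟨p, q, hpq, rfl⟩ := Finset.card_eq_two.mp hcard
  have hp : p ∈ ({p, q} : Finset V) := by simp
  obtain ⟨w, hw, hwp⟩ := hM.exists_mem_inn (by omega) hp
  obtain ⟨u, hu, hpu⟩ := hM.exists_mem_erase_rel (by omega) hp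
  have hwq : w = q := by simpa [((mem_inn r).mp hwp).1] using hw
  have huq : u = q := by simpa [Finset.erase_insert_eq_erase, Finset.erase_singleton, hpq] using hu
  subst hwq huq
  exact hT.asymm (hM.1.1 hp) ((mem_inn r).mp hwp).2.1 hpu ((mem_inn r).mp hwp).2.2

lemma not_rel_of_inn_eq_empty (hinn : inn r s v = ∅) (huv : u ≠ v) (hu : u ∈ s) : ¬ r u v :=
  fun h => Finset.notMem_empty u (hinn ▸ (mem_inn r).mpr ⟨huv, hu, h⟩)

lemma IsTournament.eq_of_inn_eq_empty (hT : IsTournament r s) (hu : u ∈ s) (hv : v ∈ s)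
    (hinnu : inn r s u = ∅) (hinnv : inn r s v = ∅) : u = v := by
  by_contra huv
  exact not_rel_of_inn_eq_empty hinnu (Ne.symm huv) hv
    (hT.rel_of_not_rel hu hv huv (not_rel_of_inn_eq_empty hinnv huv hu))

/-- Every minimal τ-retentive set of `t` has one element, which is a Condorcet winner, and a
tournament has at most one Condorcet winner. -/
lemma tau_eq_singleton_of_subset {B : Finset V} (hT : IsTournament r t) (ht : t.Nonempty)
    (hB : B.card ≤ 2) (htau : tau r t ⊆ ↑B) : ∃ z, inn r t z = ∅ ∧ tau r t = {z} := by
  have hwinner : ∀ u ∈ tau r t, inn r t u = ∅ := by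
    intro u hu
    obtain ⟨M, huM, hM⟩ := (mem_tau_iff r).mp hu
    have hMB : M.card ≤ 2 :=
      (Finset.card_le_card (Finset.coe_subset.mp (hM.coe_subset_tau.trans htau))).trans hB
    have hM1 : M.card = 1 := by
      have := Finset.card_pos.mpr hM.1.2.1
      have := hM.card_ne_two hT
      omega
    obtain ⟨z, rfl⟩ := Finset.card_eq_one.mp hM1
    rw [Finset.mem_singleton.mp huM]
    exact (retentive_singleton_iff.mp hM.1).2
  obtain ⟨z, hz⟩ := tau_nonempty r ht
  refine ⟨z, hwinner z hz, Set.eq_singleton_iff_unique_mem.mpr ⟨hz, fun u hu => ?_⟩⟩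
  exact hT.eq_of_inn_eq_empty (tau_subset r t hu) (tau_subset r t hz) (hwinner u hu)
    (hwinner z hz)

lemma isCaptain_of_inn_inn_eq_empty (hT : IsTournament r s) (hvs : v ∈ s) (hz : z ∈ inn r s v)
    (hinn : inn r (inn r s v) z = ∅) : IsCaptain r s z v := by
  obtain ⟨-, hzs, hrzv⟩ := (mem_inn r).mp hz
  refine ⟨hzs, hvs, hrzv, fun w hws hwz hrwv => ?_⟩
  have hwv : w ≠ v := by
    rintro rfl
    exact hT.1 w hws hrwv
  exact hT.rel_of_not_rel hws hzs hwz
    (not_rel_of_inn_eq_empty hinn hwz ((mem_inn r).mpr ⟨hwv, hws, hrwv⟩))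

lemma MinRetentive.exists_captain (hT : IsTournament r s) (hM : MinRetentive r s M)
    (hcard₁ : 1 < M.card) (hcard₄ : M.card ≤ 4) (hv : v ∈ M) :
    ∃ c ∈ M, IsCaptain r s c v ∧ tau r (inn r s v) = {c} := by
  have hinn := hM.inn_nonempty hcard₁ hv
  obtain ⟨u, hu, hvu⟩ := hM.exists_mem_erase_rel hcard₁ hv
  have htau : tau r (inn r s v) ⊆ ↑((M.erase v).erase u) := by
    intro w hw
    obtain ⟨hwM, hwv⟩ := Finset.mem_inter.mp (hM.1.tau_inn_subset hv hinn hw)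
    obtain ⟨hwv, hws, hrwv⟩ := (mem_inn r).mp hwv
    have hwu : w ≠ u := by
      rintro rfl
      exact hT.asymm (hM.1.1 hv) hws hvu hrwv
    simp [hwu, hwv, hwM]
  have hpair : ((M.erase v).erase u).card ≤ 2 := by
    rw [Finset.card_erase_of_mem hu, Finset.card_erase_of_mem hv]
    omega
  obtain ⟨c, hc, htau_eq⟩ :=
    tau_eq_singleton_of_subset (hT.mono (inn_subset r s v)) hinn hpair htau
  have hcM : c ∈ M := hM.1.2.2 v hv hinn (htau_eq ▸ Set.mem_singleton c)
  have hcinn : c ∈ inn r s v := tau_subset r _ (htau_eq ▸ Set.mem_singleton c)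
  exact ⟨c, hcM, isCaptain_of_inn_inn_eq_empty hT (hM.1.1 hv) hcinn hc, htau_eq⟩

end Retentive

section Iterate

variable {α : Type*} [DecidableEq α] {f : α → α} {R : Finset α} {a : α}

lemma iterate_ne_self_of_minimal (hf : Set.MapsTo f R R)
    (hmin : ∀ B ⊆ R, B.Nonempty → (∀ x ∈ B, f x ∈ B) → B = R) (ha : a ∈ R) {k : ℕ}
    (hk₀ : 0 < k) (hk : k < R.card) : f^[k] a ≠ a := by
  intro hper
  set B := (Finset.range k).image fun i => f^[i] a
  have hBR : B ⊆ R := by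
    intro x hx
    obtain ⟨i, -, rfl⟩ := Finset.mem_image.mp hx
    exact hf.iterate i ha
  have hclosed : ∀ x ∈ B, f x ∈ B := by
    intro x hx
    obtain ⟨i, hi, rfl⟩ := Finset.mem_image.mp hx
    rw [← Function.iterate_succ_apply' f i a]
    rcases (Nat.succ_le_of_lt (Finset.mem_range.mp hi)).lt_or_eq with hlt | heq
    · exact Finset.mem_image_of_mem _ (Finset.mem_range.mpr hlt)
    · rw [heq, hper]
      exact Finset.mem_image_of_mem (fun i => f^[i] a) (Finset.mem_range.mpr hk₀)
  have hBcard : B.card < R.card :=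
    (Finset.card_image_le.trans (Finset.card_range k).le).trans_lt hk
  have hBne : B.Nonempty := ⟨a, Finset.mem_image_of_mem (fun i => f^[i] a)
    (Finset.mem_range.mpr hk₀)⟩
  exact hBcard.ne (congrArg Finset.card (hmin B hBR hBne hclosed))

lemma iterate_card_eq_self_of_minimal (hf : Set.MapsTo f R R)
    (hmin : ∀ B ⊆ R, B.Nonempty → (∀ x ∈ B, f x ∈ B) → B = R) (ha : a ∈ R) :
    f^[R.card] a = a := by
  have hsep : ∀ i j, i < j → j ≤ R.card → f^[j] a = f^[i] a → j = R.card ∧ i = 0 := by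
    intro i j hij hj heq
    have hper : f^[j - i] (f^[i] a) = f^[i] a := by
      rw [← Function.iterate_add_apply, Nat.sub_add_cancel hij.le, heq]
    by_contra hne
    exact iterate_ne_self_of_minimal hf hmin (hf.iterate i ha) (by omega) (by omega) hper
  set B := (Finset.range R.card).image fun i => f^[i] a
  have hBR : B = R := by
    refine Finset.eq_of_subset_of_card_le ?_ (le_of_eq ?_)
    · intro x hx
      obtain ⟨i, -, rfl⟩ := Finset.mem_image.mp hx
      exact hf.iterate i ha
    · rw [Finset.card_image_of_injOn, Finset.card_range]
      intro i hi j hj heq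
      simp only [Finset.coe_range, Set.mem_Iio] at hi hj
      rcases lt_trichotomy i j with hij | hij | hij
      · have := hsep i j hij hj.le heq.symm
        omega
      · exact hij
      · have := hsep j i hij hi.le heq
        omega
  have hmem : f^[R.card] a ∈ B := by
    rw [hBR]
    exact hf.iterate R.card ha
  obtain ⟨i, hi, heq⟩ := Finset.mem_image.mp hmem
  have hi := Finset.mem_range.mp hi
  obtain ⟨-, rfl⟩ := hsep i R.card hi le_rfl heq.symm
  exact heq.symm

end Iterate

theorem stmt7 [DecidableEq V] (r : V → V → Prop) [DecidableRel r] (s : Finset V)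
    (hT : IsTournament r s) (R : Finset V) (hR : MinRetentive r s R) :
    R.card ≠ 4 := by
  intro hcard
  choose! c hcR hcapt htau using fun v (hv : v ∈ R) =>
    hR.exists_captain hT (by omega) hcard.le hv
  have hmin : ∀ B ⊆ R, B.Nonempty → (∀ x ∈ B, c x ∈ B) → B = R := by
    refine fun B hBR hBne hcB => hR.2 B ⟨hBR.trans hR.1.1, hBne, fun v hv _ => ?_⟩ hBR
    rw [htau v (hBR hv), Set.singleton_subset_iff]
    exact hcB v hv
  obtain ⟨a, ha⟩ := hR.1.2.1
  have hc4 : c^[4] a = a := hcard ▸ iterate_card_eq_self_of_minimal hcR hmin ha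
  have hc2 : c^[2] a ≠ a := iterate_ne_self_of_minimal hcR hmin ha (by norm_num) (by omega)
  have hca := hcR a ha
  have hc2a := hcR _ hca
  have forward : r a (c^[2] a) := (hcapt a ha).rel_of_isCaptain (hcapt _ hca) hT hc2
  have backward : r (c^[2] a) (c^[4] a) :=
    (hcapt _ hc2a).rel_of_isCaptain (hcapt _ (hcR _ hc2a)) hT (hc4.trans_ne hc2.symm)
  rw [hc4] at backward
  exact hT.asymm (hR.1.1 ha) (hR.1.1 hc2a) forward backward
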